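/- arXiv:1710.03863 — 5 statements merged into one kernel-verified Lean document; each statement's English description precedes it below -/
import Mathlib

section
/- If X is a Gaussian random variable with mean μ and variance 1, and H_k denotes the Hermite polynomial of degree k defined by H_k(x) = (-1)^k exp(x²/2) d^k/dx^k [exp(-x²/2)], then E[H_k(X)] = μ^k. -/
/-!
Stein's identity `E[(X - μ) f(X)] = v E[f'(X)]` for `X ~ N(μ, v)` is integration by parts against
the density, whose derivative is `-(x - μ)/v` times itself. Applied to `f = H_k` together with the
recursion `H_{k+1} = X H_k - H_k'`, it gives `E[H_{k+1}(X)] = μ E[H_k(X)]` when `v = 1`.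
-/

open MeasureTheory ProbabilityTheory Polynomial
open scoped NNReal

namespace ProbabilityTheory

variable {μ : ℝ} {v : ℝ≥0}

lemma integrable_pow_gaussianReal (n : ℕ) : Integrable (fun x : ℝ ↦ x ^ n) (gaussianReal μ v) :=
  integrable_pow_of_mem_interior_integrableExpSet (by simp) n

lemma integrable_aeval_gaussianReal {R : Type*} [CommSemiring R] [Algebra R ℝ] (p : R[X]) :
    Integrable (fun x ↦ aeval x p) (gaussianReal μ v) := by
  induction p using Polynomial.induction_on' with
  | add p q hp hq => simp only [map_add]; exact hp.add hq
  | monomial n a => simpa using (integrable_pow_gaussianReal n).const_mul (algebraMap R ℝ a)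

lemma hasDerivAt_gaussianPDFReal (μ : ℝ) (v : ℝ≥0) (x : ℝ) :
    HasDerivAt (gaussianPDFReal μ v) (-(x - μ) / v * gaussianPDFReal μ v x) x := by
  have hexponent : HasDerivAt (fun y : ℝ ↦ -(y - μ) ^ 2 / (2 * v)) (-(x - μ) / v) x :=
    ((((hasDerivAt_id x).sub_const μ).pow 2).neg.div_const (2 * v : ℝ)).congr_deriv (by
      simp only [id, Nat.cast_ofNat]; ring)
  exact (hexponent.exp.const_mul (√(2 * Real.pi * v))⁻¹).congr_deriv (by
    simp only [gaussianPDFReal]; ring)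

lemma integrable_gaussianReal_iff {E : Type*} [NormedAddCommGroup E] [NormedSpace ℝ E]
    (hv : v ≠ 0) {f : ℝ → E} :
    Integrable f (gaussianReal μ v) ↔ Integrable (fun x ↦ gaussianPDFReal μ v x • f x) := by
  rw [gaussianReal_of_var_ne_zero μ hv, integrable_withDensity_iff_integrable_smul'
    (measurable_gaussianPDF μ v) (ae_of_all _ fun _ ↦ gaussianPDF_lt_top)]
  simp only [toReal_gaussianPDF]

theorem integral_sub_mul_gaussianReal {f f' : ℝ → ℝ} (hf : ∀ x, HasDerivAt f (f' x) x)
    (hf_int : Integrable f (gaussianReal μ v)) (hf'_int : Integrable f' (gaussianReal μ v))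
    (hxf_int : Integrable (fun x ↦ (x - μ) * f x) (gaussianReal μ v)) :
    ∫ x, (x - μ) * f x ∂gaussianReal μ v = v * ∫ x, f' x ∂gaussianReal μ v := by
  rcases eq_or_ne v 0 with rfl | hv
  · simp [gaussianReal_zero_var]
  rw [integrable_gaussianReal_iff hv] at hf_int hf'_int hxf_int
  simp only [smul_eq_mul] at hf_int hf'_int hxf_int
  have hscaled : ∀ x, f x * (-(x - μ) / v * gaussianPDFReal μ v x)
      = -((v : ℝ)⁻¹ * (gaussianPDFReal μ v x * ((x - μ) * f x))) := fun x ↦ by ring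
  have hibp : ∫ x, f x * (-(x - μ) / v * gaussianPDFReal μ v x)
      = -∫ x, f' x * gaussianPDFReal μ v x :=
    integral_mul_deriv_eq_deriv_mul_of_integrable (fun x _ ↦ hf x)
      (fun x _ ↦ hasDerivAt_gaussianPDFReal μ v x)
      (by simpa only [Pi.mul_def, hscaled] using (hxf_int.const_mul (v : ℝ)⁻¹).fun_neg)
      (by simpa only [Pi.mul_def, mul_comm] using hf'_int)
      (by simpa only [Pi.mul_def, mul_comm] using hf_int)
  simp only [hscaled, integral_neg, integral_const_mul, neg_inj, mul_comm (f' _)] at hibp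
  simp only [integral_gaussianReal_eq_integral_smul hv, smul_eq_mul]
  rw [← hibp, mul_inv_cancel_left₀ (NNReal.coe_ne_zero.mpr hv)]

lemma integral_aeval_X_mul_gaussianReal {R : Type*} [CommSemiring R] [Algebra R ℝ] (p : R[X]) :
    ∫ x, aeval x (X * p) ∂gaussianReal μ v
      = μ * ∫ x, aeval x p ∂gaussianReal μ v
        + v * ∫ x, aeval x (derivative p) ∂gaussianReal μ v := by
  have hp := integrable_aeval_gaussianReal (μ := μ) (v := v) p
  have hXp : Integrable (fun x ↦ x * aeval x p) (gaussianReal μ v) := by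
    refine (integrable_aeval_gaussianReal (X * p)).congr (ae_of_all _ fun x ↦ ?_)
    simp only [map_mul, aeval_X]
  simp only [map_mul, aeval_X]
  have hstein := integral_sub_mul_gaussianReal (fun x ↦ p.hasDerivAt_aeval x) hp
    (integrable_aeval_gaussianReal _) ((hXp.sub (hp.const_mul μ)).congr (ae_of_all _ fun x ↦ by
      simp only [Pi.sub_apply, sub_mul]))
  simp only [sub_mul] at hstein
  rw [integral_sub hXp (hp.const_mul μ), integral_const_mul] at hstein
  linarith

end ProbabilityTheory

/-- If `X ~ N(μ, 1)` and `H_k` is the probabilists' Hermite polynomial of degree `k`,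
then `E[H_k(X)] = μ ^ k`. -/
theorem expectation_hermite_gaussian (μ : ℝ) (k : ℕ) :
    ∫ x, (aeval x (hermite k) : ℝ) ∂(gaussianReal μ 1) = μ ^ k := by
  induction k with
  | zero => simp
  | succ k ih =>
    simp only [hermite_succ, map_sub]
    rw [integral_sub (integrable_aeval_gaussianReal _) (integrable_aeval_gaussianReal _),
      integral_aeval_X_mul_gaussianReal, ih, NNReal.coe_one, one_mul]
    ring
end

section
/- Let A be an event independent of random variables X and Y, let k ≥ 2 be an integer, and let Z = X·1(A) + Y·1(Aᶜ). Then E|Z - E Z|^k ≤ 2^{k-1}( E|X - E X|^k · P(A) + E|Y - E Y|^k · P(Aᶜ) + |E X - E Y|^k · P(A) · P(Aᶜ) ). -/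
/-!
On `A` we have `Z - E Z = (X - E X) + P(Aᶜ) (E X - E Y)`, and symmetrically on `Aᶜ`, so
`|a + b|^k ≤ 2^(k-1) (|a|^k + |b|^k)` bounds `|Z - E Z|^k` pointwise. Independence of `A` from
`(X, Y)` gives `E[1_A f(X, Y)] = P(A) E f(X, Y)`, which evaluates the expectation of the
bound, and the cross terms `p q^k + q p^k` (with `p = P(A)`, `q = P(Aᶜ)`) are at most `p q`
once `k ≥ 2`.
-/

open MeasureTheory ProbabilityTheory
open scoped ENNReal

theorem abs_sub_mul_add_mul_pow_le {p q : ℝ} (hq : 0 ≤ q) (hpq : p + q = 1) (x a b : ℝ)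
    (k : ℕ) :
    |x - (p * a + q * b)| ^ k ≤ 2 ^ (k - 1) * (|x - a| ^ k + q ^ k * |a - b| ^ k) :=
  calc |x - (p * a + q * b)| ^ k = |(x - a) + q * (a - b)| ^ k := by
        rw [eq_sub_of_add_eq hpq]; ring_nf
    _ ≤ (|x - a| + |q * (a - b)|) ^ k := by gcongr; exact abs_add_le _ _
    _ ≤ 2 ^ (k - 1) * (|x - a| ^ k + |q * (a - b)| ^ k) :=
        add_pow_le (abs_nonneg _) (abs_nonneg _) k
    _ = 2 ^ (k - 1) * (|x - a| ^ k + q ^ k * |a - b| ^ k) := by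
        rw [abs_mul, mul_pow, abs_of_nonneg hq]

theorem abs_indicator_add_indicator_compl_sub_pow_le {Ω : Type*} (A : Set Ω) (x y : Ω → ℝ)
    {p q : ℝ} (hp : 0 ≤ p) (hq : 0 ≤ q) (hpq : p + q = 1) (a b : ℝ) (k : ℕ) (ω : Ω) :
    |A.indicator x ω + Aᶜ.indicator y ω - (p * a + q * b)| ^ k
      ≤ 2 ^ (k - 1) * (A.indicator (fun ω => |x ω - a| ^ k + q ^ k * |a - b| ^ k) ω
        + Aᶜ.indicator (fun ω => |y ω - b| ^ k + p ^ k * |a - b| ^ k) ω) := by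
  by_cases hω : ω ∈ A
  · simpa [hω] using abs_sub_mul_add_mul_pow_le hq hpq (x ω) a b k
  · simpa [hω, add_comm (p * a), abs_sub_comm b a] using
      abs_sub_mul_add_mul_pow_le hp ((add_comm q p).trans hpq) (y ω) b a k

theorem mul_pow_add_mul_pow_le_mul {p q : ℝ} (hp : 0 ≤ p) (hq : 0 ≤ q) (hpq : p + q = 1)
    {k : ℕ} (hk : 2 ≤ k) : p * q ^ k + q * p ^ k ≤ p * q := by
  have hqk : q ^ k ≤ q ^ 2 := pow_le_pow_of_le_one hq (by linarith) hk
  have hpk : p ^ k ≤ p ^ 2 := pow_le_pow_of_le_one hp (by linarith) hk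
  calc p * q ^ k + q * p ^ k ≤ p * q ^ 2 + q * p ^ 2 := by gcongr
    _ = p * q := by rw [← mul_one (p * q), ← hpq]; ring

theorem MeasureTheory.MemLp.integrable_abs_sub_const_pow {Ω : Type*}
    {mΩ : MeasurableSpace Ω} {μ : Measure Ω} [IsFiniteMeasure μ] {f : Ω → ℝ} {k : ℕ}
    (hf : MemLp f k μ) (c : ℝ) :
    Integrable (fun ω => |f ω - c| ^ k) μ := by
  simpa only [Real.norm_eq_abs, Pi.sub_apply] using (hf.sub (memLp_const c)).integrable_norm_pow'

theorem integral_indicator_add_indicator_compl_of_indepFun {Ω β : Type*}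
    {mΩ : MeasurableSpace Ω} [MeasurableSpace β] {μ : Measure Ω} {A : Set Ω} {V : Ω → β}
    (hA : MeasurableSet A)
    (hindep : IndepFun (A.indicator fun _ => (1 : ℝ)) V μ) (hV : AEMeasurable V μ)
    {f g : β → ℝ} (hf : Measurable f) (hg : Measurable g)
    (hfi : Integrable (fun ω => f (V ω)) μ) (hgi : Integrable (fun ω => g (V ω)) μ) :
    ∫ ω, A.indicator (fun ω => f (V ω)) ω + Aᶜ.indicator (fun ω => g (V ω)) ω ∂μ
      = μ.real A * ∫ ω, f (V ω) ∂μ + μ.real Aᶜ * ∫ ω, g (V ω) ∂μ := by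
  set m := MeasurableSpace.comap (A.indicator fun _ => (1 : ℝ)) inferInstance
  have hm : m ≤ mΩ := (measurable_const.indicator hA).comap_le
  have hAm : MeasurableSet[m] A :=
    ⟨{1}, measurableSet_singleton 1, by ext ω; by_cases hω : ω ∈ A <;> simp [hω]⟩
  have hmV : Indep m (MeasurableSpace.comap V inferInstance) μ :=
    (IndepFun_iff_Indep _ _ _).1 hindep
  rw [integral_add (hfi.indicator hA) (hgi.indicator hA.compl), integral_indicator hA,
    integral_indicator hA.compl, hmV.setIntegral_eq_mul hm hV hAm hf.aestronglyMeasurable,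
    hmV.setIntegral_eq_mul hm hV hAm.compl hg.aestronglyMeasurable]

/-- If `A` is an event independent of `(X, Y)`, `k ≥ 2` and `Z = X·1_A + Y·1_{Aᶜ}`, then
`E|Z - E Z|^k ≤ 2^(k-1) (E|X - E X|^k P(A) + E|Y - E Y|^k P(Aᶜ) + |E X - E Y|^k P(A) P(Aᶜ))`. -/
theorem central_moment_indicator_mix {Ω : Type*} [MeasurableSpace Ω] (μ : Measure Ω)
    [IsProbabilityMeasure μ] (X Y : Ω → ℝ) (A : Set Ω) (hA : MeasurableSet A)
    (k : ℕ) (hk : 2 ≤ k)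
    (hX : MemLp X k μ) (hY : MemLp Y k μ)
    (hindep : IndepFun (A.indicator (fun _ => (1 : ℝ))) (fun ω => (X ω, Y ω)) μ)
    (Z : Ω → ℝ) (hZ : Z = fun ω => A.indicator X ω + Aᶜ.indicator Y ω) :
    ∫ ω, |Z ω - ∫ ω', Z ω' ∂μ| ^ k ∂μ
      ≤ 2 ^ (k - 1) *
        ((∫ ω, |X ω - ∫ ω', X ω' ∂μ| ^ k ∂μ) * (μ A).toReal
          + (∫ ω, |Y ω - ∫ ω', Y ω' ∂μ| ^ k ∂μ) * (μ Aᶜ).toReal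
          + |∫ ω, X ω ∂μ - ∫ ω, Y ω ∂μ| ^ k * (μ A).toReal * (μ Aᶜ).toReal) := by
  subst hZ
  simp only [← measureReal_def]
  set mX := ∫ ω, X ω ∂μ
  set mY := ∫ ω, Y ω ∂μ
  have hpq : μ.real A + μ.real Aᶜ = 1 := probReal_add_probReal_compl hA
  have hV : AEMeasurable (fun ω => (X ω, Y ω)) μ := hX.1.aemeasurable.prodMk hY.1.aemeasurable
  have hk1 : (1 : ℝ≥0∞) ≤ k := by exact_mod_cast (by omega : 1 ≤ k)
  set D := |mX - mY| ^ k
  have hcX := hX.integrable_abs_sub_const_pow mX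
  have hcY := hY.integrable_abs_sub_const_pow mY
  have hbX := hcX.add (integrable_const (μ.real Aᶜ ^ k * D))
  have hbY := hcY.add (integrable_const (μ.real A ^ k * D))
  rw [integral_indicator_add_indicator_compl_of_indepFun hA hindep hV measurable_fst
    measurable_snd (hX.integrable hk1) (hY.integrable hk1)]
  calc _ ≤ ∫ ω, 2 ^ (k - 1) *
        (A.indicator (fun ω => |X ω - mX| ^ k + μ.real Aᶜ ^ k * D) ω
          + Aᶜ.indicator (fun ω => |Y ω - mY| ^ k + μ.real A ^ k * D) ω) ∂μ :=
        integral_mono_of_nonneg (ae_of_all _ fun ω => by positivity)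
          (((hbX.indicator hA).add (hbY.indicator hA.compl)).const_mul _)
          (ae_of_all _ (abs_indicator_add_indicator_compl_sub_pow_le A X Y measureReal_nonneg
            measureReal_nonneg hpq mX mY k))
    _ = 2 ^ (k - 1) * (μ.real A * ((∫ ω, |X ω - mX| ^ k ∂μ) + μ.real Aᶜ ^ k * D)
          + μ.real Aᶜ * ((∫ ω, |Y ω - mY| ^ k ∂μ) + μ.real A ^ k * D)) := by
        rw [integral_const_mul, integral_indicator_add_indicator_compl_of_indepFun hA hindep hV
          (f := fun v => |v.1 - mX| ^ k + μ.real Aᶜ ^ k * D)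
          (g := fun v => |v.2 - mY| ^ k + μ.real A ^ k * D)
          (by fun_prop) (by fun_prop) hbX hbY, integral_add hcX (integrable_const _),
          integral_add hcY (integrable_const _), integral_const, integral_const]
        simp
    _ ≤ _ := by
        refine mul_le_mul_of_nonneg_left ?_ (by positivity)
        linarith [mul_le_mul_of_nonneg_left (mul_pow_add_mul_pow_le_mul measureReal_nonneg
          measureReal_nonneg hpq hk) (by positivity : 0 ≤ D)]
end

section
/- Let X ~ N(μ, λ²) with μ ≥ (c₁/2)·λ·√(ln n) for constants c₁ >ated 0, λ > 0, n ≥ 2. Then |E|X| - μ| ≤ (2λ²/μ)·exp(-μ²/(2λ²)), and consequently |E|X| - μ| ≤ (4λ/(c₁√(ln n)))·n^{-c₁²/8}. -/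
/-!
Since `E X = μ`, the difference `E|X| - μ = E[|X| - X] = 2 E[X⁻]` is nonnegative. Completing the
square, the density of `N(μ, v)` at `x` is the centred density at `x` times
`exp(-μ²/(2v)) · exp(μx/v)`, and `-x` times the centred density is bounded by `1` because
`s e^{-s²/2} ≤ 1`. Integrating `2 exp(-μ²/(2v)) exp(μx/v)` over `x ≤ 0` gives the first bound;
the second is the first evaluated at the threshold `(c₁/2) λ √(ln n)`, where it is larger since
`μ ↦ μ⁻¹ exp(-μ²/(2v))` is decreasing.
-/

open MeasureTheory ProbabilityTheory Real Set
open scoped NNReal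

lemma le_exp_sq_div_two (s : ℝ) : s ≤ exp (s ^ 2 / 2) :=
  calc s ≤ s ^ 2 / 2 + 1 := by nlinarith [sq_nonneg (s - 1)]
    _ ≤ exp (s ^ 2 / 2) := add_one_le_exp _

lemma mul_exp_neg_sq_div_le_sqrt {v : ℝ} (hv : 0 < v) (t : ℝ) :
    t * exp (-t ^ 2 / (2 * v)) ≤ √v := by
  have hsv : 0 < √v := sqrt_pos.2 hv
  have h : t / √v ≤ exp (t ^ 2 / (2 * v)) := by
    simpa [div_pow, sq_sqrt hv.le, div_div, mul_comm] using le_exp_sq_div_two (t / √v)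
  rw [neg_div, exp_neg, ← div_eq_mul_inv, div_le_iff₀ (exp_pos _)]
  exact (div_le_iff₀' hsv).1 h

lemma gaussianPDFReal_mul_neg_le (μ : ℝ) {v : ℝ≥0} (hv : v ≠ 0) (x : ℝ) :
    gaussianPDFReal μ v x * (-x) ≤ exp (-μ ^ 2 / (2 * v)) * exp (μ / v * x) := by
  have hv' : (0 : ℝ) < v := by positivity
  have hsplit : exp (-(x - μ) ^ 2 / (2 * v))
      = exp (-x ^ 2 / (2 * v)) * (exp (-μ ^ 2 / (2 * v)) * exp (μ / v * x)) := by
    rw [← exp_add, ← exp_add]; congr 1; field_simp; ring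
  have hnorm : (√(2 * π * v))⁻¹ * √v ≤ 1 := by
    rw [inv_mul_le_one₀ (by positivity)]
    exact sqrt_le_sqrt (by nlinarith [pi_gt_three])
  calc gaussianPDFReal μ v x * (-x)
      = (√(2 * π * v))⁻¹ * ((-x) * exp (-(-x) ^ 2 / (2 * v)))
          * (exp (-μ ^ 2 / (2 * v)) * exp (μ / v * x)) := by
        rw [gaussianPDFReal, hsplit, neg_sq]; ring
    _ ≤ (√(2 * π * v))⁻¹ * √v * (exp (-μ ^ 2 / (2 * v)) * exp (μ / v * x)) := by
        gcongr
        exact mul_exp_neg_sq_div_le_sqrt hv' _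
    _ ≤ exp (-μ ^ 2 / (2 * v)) * exp (μ / v * x) := by
        apply mul_le_of_le_one_left (by positivity) hnorm

lemma integral_abs_gaussianReal_sub_mean (μ : ℝ) (v : ℝ≥0) :
    ∫ x, |x| ∂gaussianReal μ v - μ = ∫ x, (|x| - x) ∂gaussianReal μ v := by
  have hint : Integrable (fun x ↦ x) (gaussianReal μ v) :=
    memLp_one_iff_integrable.1 (memLp_id_gaussianReal 1)
  rw [integral_sub hint.abs hint, integral_id_gaussianReal]

theorem integral_abs_gaussianReal_sub_mean_le {μ : ℝ} {v : ℝ≥0} (hv : v ≠ 0) (hμ : 0 < μ) :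
    ∫ x, |x| ∂gaussianReal μ v - μ ≤ 2 * v / μ * exp (-μ ^ 2 / (2 * v)) := by
  have hv' : (0 : ℝ) < v := by positivity
  set C := exp (-μ ^ 2 / (2 * v))
  have hb : 0 < μ / v := by positivity
  have hdom : ∀ x, gaussianPDFReal μ v x * (|x| - x)
      ≤ (Iic 0).indicator (fun x ↦ 2 * C * exp (μ / v * x)) x := by
    intro x
    rcases le_or_gt x 0 with hx | hx
    · rw [indicator_of_mem (mem_Iic.2 hx), abs_of_nonpos hx]
      linarith [gaussianPDFReal_mul_neg_le μ hv x]
    · rw [indicator_of_notMem (notMem_Iic.2 hx), abs_of_pos hx, sub_self, mul_zero]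
  calc ∫ x, |x| ∂gaussianReal μ v - μ
      = ∫ x, gaussianPDFReal μ v x * (|x| - x) := by
        rw [integral_abs_gaussianReal_sub_mean, integral_gaussianReal_eq_integral_smul hv]; rfl
    _ ≤ ∫ x, (Iic 0).indicator (fun x ↦ 2 * C * exp (μ / v * x)) x := by
        refine integral_mono_of_nonneg (ae_of_all _ fun x ↦ ?_) ?_ (ae_of_all _ hdom)
        · exact mul_nonneg (gaussianPDFReal_nonneg μ v x) (sub_nonneg.2 (le_abs_self x))
        · exact (integrable_indicator_iff measurableSet_Iic).2
            ((integrableOn_exp_mul_Iic hb 0).const_mul _)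
    _ = 2 * v / μ * C := by
        rw [integral_indicator measurableSet_Iic, integral_const_mul, integral_exp_mul_Iic hb,
          mul_zero, exp_zero]
        field_simp

theorem abs_integral_abs_gaussianReal_sub_mean_le {μ : ℝ} {v : ℝ≥0} (hv : v ≠ 0) (hμ : 0 < μ) :
    |∫ x, |x| ∂gaussianReal μ v - μ| ≤ 2 * v / μ * exp (-μ ^ 2 / (2 * v)) := by
  rw [abs_of_nonneg]
  · exact integral_abs_gaussianReal_sub_mean_le hv hμ
  · rw [integral_abs_gaussianReal_sub_mean]
    exact integral_nonneg fun x ↦ sub_nonneg.2 (le_abs_self x)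

lemma div_mul_exp_neg_sq_div_antitoneOn {v : ℝ} (hv : 0 < v) :
    AntitoneOn (fun μ ↦ 2 * v / μ * exp (-μ ^ 2 / (2 * v))) (Ioi 0) := by
  intro a (ha : 0 < a) b _ hab
  dsimp only
  gcongr

/-- For `X ~ N(μ, λ²)` with `μ ≥ (c₁/2) λ √(ln n)`, `c₁ > 0`, `λ > 0`, `n ≥ 2`,
`|E|X| - μ| ≤ (2λ²/μ)·exp(-μ²/(2λ²))` and consequently
`|E|X| - μ| ≤ (4λ/(c₁ √(ln n)))·n^(-c₁²/8)`. -/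
theorem abs_expectation_abs_gaussian_sub_mean_le (μ lam c₁ : ℝ) (n : ℕ)
    (hn : 2 ≤ n) (hc : 0 < c₁) (hlam : 0 < lam)
    (hμ : (c₁ / 2) * lam * Real.sqrt (Real.log n) ≤ μ) :
    |(∫ x, |x| ∂(gaussianReal μ ⟨lam ^ 2, sq_nonneg lam⟩)) - μ|
        ≤ (2 * lam ^ 2 / μ) * Real.exp (-μ ^ 2 / (2 * lam ^ 2))
    ∧ |(∫ x, |x| ∂(gaussianReal μ ⟨lam ^ 2, sq_nonneg lam⟩)) - μ|
        ≤ (4 * lam / (c₁ * Real.sqrt (Real.log n))) * (n : ℝ) ^ (-c₁ ^ 2 / 8) := by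
  have hlog : 0 < log n := log_pos (by exact_mod_cast hn)
  set a := c₁ / 2 * lam * √(log n) with ha
  have ha0 : 0 < a := by positivity
  have hv : (⟨lam ^ 2, sq_nonneg lam⟩ : ℝ≥0) ≠ 0 := NNReal.coe_ne_zero.1 (pow_pos hlam 2).ne'
  have hbound := abs_integral_abs_gaussianReal_sub_mean_le hv (ha0.trans_le hμ)
  refine ⟨hbound, hbound.trans ?_⟩
  calc 2 * lam ^ 2 / μ * exp (-μ ^ 2 / (2 * lam ^ 2))
      ≤ 2 * lam ^ 2 / a * exp (-a ^ 2 / (2 * lam ^ 2)) :=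
        div_mul_exp_neg_sq_div_antitoneOn (pow_pos hlam 2) ha0 (ha0.trans_le hμ) hμ
    _ = 4 * lam / (c₁ * √(log n)) * (n : ℝ) ^ (-c₁ ^ 2 / 8) := by
        rw [rpow_def_of_pos (by positivity)]
        congr 1
        · rw [ha]; field_simp; ring
        · congr 1; rw [ha, mul_pow, mul_pow, sq_sqrt hlog.le]; field_simp; norm_num
end

section
/- Let X ~ N(μ, λ²) with μ > 0. Then E[|X|] - μ = 2·E[|X|·1(X ≤ 0)] ≤ (2λ²/μ)·exp(-μ²/(2λ²)). -/
open MeasureTheory ProbabilityTheory Real Set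
open scoped NNReal

/-!
Since `|x| - x = 2 |x| 1(x ≤ 0)` and `E X = μ`, the identity is linearity of the integral.
For the bound, completing the square gives, for `x ≤ 0` and `y = -μx/λ²`,
`|x| φ_{μ,λ²}(x) = (λ²/μ) e^{-μ²/(2λ²)} φ_{0,λ²}(x) · y e^{-y}`, and `y e^{-y} ≤ 1`;
integrating against the probability density `φ_{0,λ²}` gives `λ²/μ · e^{-μ²/(2λ²)}`.
-/

lemma integral_abs_sub_integral_eq_two_mul_setIntegral_Iic {P : Measure ℝ}
    (hP : Integrable (fun x ↦ x) P) :
    (∫ x, |x| ∂P) - ∫ x, x ∂P = 2 * ∫ x in Iic (0 : ℝ), |x| ∂P := by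
  have h_abs_sub : (fun x : ℝ ↦ |x| - x) = (Iic (0 : ℝ)).indicator fun x ↦ 2 * |x| := by
    funext x
    rcases le_or_gt x 0 with hx | hx
    · rw [indicator_of_mem (mem_Iic.2 hx), abs_of_nonpos hx]
      ring
    · rw [indicator_of_notMem (notMem_Iic.2 hx), abs_of_pos hx, sub_self]
  rw [← integral_sub hP.abs hP, h_abs_sub, integral_indicator measurableSet_Iic,
    integral_const_mul]

lemma gaussianPDFReal_eq_mul_gaussianPDFReal_zero (μ : ℝ) (v : ℝ≥0) (x : ℝ) :
    gaussianPDFReal μ v x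
      = exp (-μ ^ 2 / (2 * v)) * exp (μ * x / v) * gaussianPDFReal 0 v x := by
  by_cases hv : (v : ℝ) = 0
  · simp [gaussianPDFReal, hv]
  have h_square : exp (-(x - μ) ^ 2 / (2 * v))
      = exp (-μ ^ 2 / (2 * v)) * exp (μ * x / v) * exp (-x ^ 2 / (2 * v)) := by
    rw [← exp_add, ← exp_add]
    congr 1
    field_simp
    ring
  simp only [gaussianPDFReal, sub_zero, h_square]
  ring

lemma abs_mul_gaussianPDFReal_le {μ : ℝ} {v : ℝ≥0} {x : ℝ} (hμ : 0 < μ) (hv : v ≠ 0)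
    (hx : x ≤ 0) :
    |x| * gaussianPDFReal μ v x ≤ v / μ * exp (-μ ^ 2 / (2 * v)) * gaussianPDFReal 0 v x := by
  have hv' : (0 : ℝ) < v := by positivity
  set y := -(μ * x / v)
  have hy : y * exp (-y) ≤ 1 :=
    (mul_exp_neg_le_exp_neg_one y).trans (exp_le_one_iff.2 (by norm_num))
  have h_abs : |x| = v / μ * y := by
    rw [abs_of_nonpos hx]
    simp only [y]
    field_simp
  rw [gaussianPDFReal_eq_mul_gaussianPDFReal_zero, h_abs, show μ * x / v = -y by ring]
  calc v / μ * y * (exp (-μ ^ 2 / (2 * v)) * exp (-y) * gaussianPDFReal 0 v x)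
      = v / μ * exp (-μ ^ 2 / (2 * v)) * gaussianPDFReal 0 v x * (y * exp (-y)) := by ring
    _ ≤ v / μ * exp (-μ ^ 2 / (2 * v)) * gaussianPDFReal 0 v x :=
      mul_le_of_le_one_right (by have := gaussianPDFReal_nonneg 0 v x; positivity) hy

lemma setIntegral_Iic_abs_gaussianReal_le {μ : ℝ} {v : ℝ≥0} (hμ : 0 < μ) (hv : v ≠ 0) :
    ∫ x in Iic (0 : ℝ), |x| ∂gaussianReal μ v ≤ v / μ * exp (-μ ^ 2 / (2 * v)) := by
  set K := v / μ * exp (-μ ^ 2 / (2 * v))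
  have h_le : ∀ x, gaussianPDFReal μ v x • (Iic (0 : ℝ)).indicator (fun x ↦ |x|) x
      ≤ K * gaussianPDFReal 0 v x := by
    intro x
    rw [smul_eq_mul, mul_comm]
    by_cases hx : x ≤ 0
    · rw [indicator_of_mem (mem_Iic.2 hx)]
      exact abs_mul_gaussianPDFReal_le hμ hv hx
    · rw [indicator_of_notMem (notMem_Iic.2 (not_le.1 hx)), zero_mul]
      have := gaussianPDFReal_nonneg 0 v x
      positivity
  have h_nonneg : ∀ x, 0 ≤ gaussianPDFReal μ v x • (Iic (0 : ℝ)).indicator (fun x ↦ |x|) x :=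
    fun x ↦ smul_nonneg (gaussianPDFReal_nonneg μ v x)
      (indicator_nonneg (fun x _ ↦ abs_nonneg x) x)
  calc ∫ x in Iic (0 : ℝ), |x| ∂gaussianReal μ v
      = ∫ x, gaussianPDFReal μ v x • (Iic (0 : ℝ)).indicator (fun x ↦ |x|) x := by
        rw [← integral_indicator measurableSet_Iic, integral_gaussianReal_eq_integral_smul hv]
    _ ≤ ∫ x, K * gaussianPDFReal 0 v x :=
        integral_mono_of_nonneg (ae_of_all _ h_nonneg)
          ((integrable_gaussianPDFReal 0 v).const_mul K) (ae_of_all _ h_le)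
    _ = K := by rw [integral_const_mul, integral_gaussianPDFReal_eq_one 0 hv, mul_one]

/-- For `X ~ N(μ, λ²)` with `μ > 0`,
`E|X| - μ = 2·E[|X|·1(X ≤ 0)] ≤ (2λ²/μ)·exp(-μ²/(2λ²))`. -/
theorem expectation_abs_gaussian_sub_mean (μ lam : ℝ) (hμ : 0 < μ) (hlam : 0 < lam) :
    (∫ x, |x| ∂(gaussianReal μ ⟨lam ^ 2, sq_nonneg lam⟩)) - μ
        = 2 * ∫ x in Set.Iic (0 : ℝ), |x| ∂(gaussianReal μ ⟨lam ^ 2, sq_nonneg lam⟩)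
    ∧ 2 * (∫ x in Set.Iic (0 : ℝ), |x| ∂(gaussianReal μ ⟨lam ^ 2, sq_nonneg lam⟩))
        ≤ (2 * lam ^ 2 / μ) * Real.exp (-μ ^ 2 / (2 * lam ^ 2)) := by
  have hv : (⟨lam ^ 2, sq_nonneg lam⟩ : ℝ≥0) ≠ 0 :=
    fun h ↦ (pow_pos hlam 2).ne' (congrArg NNReal.toReal h)
  constructor
  · have h_mean : ∫ x, x ∂gaussianReal μ ⟨lam ^ 2, sq_nonneg lam⟩ = μ :=
      integral_id_gaussianReal
    have h_int : Integrable (fun x ↦ x) (gaussianReal μ ⟨lam ^ 2, sq_nonneg lam⟩) :=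
      memLp_one_iff_integrable.1 (memLp_id_gaussianReal 1)
    have h := integral_abs_sub_integral_eq_two_mul_setIntegral_Iic h_int
    rwa [h_mean] at h
  · have h := setIntegral_Iic_abs_gaussianReal_le hμ hv
    rw [mul_div_assoc, mul_assoc]
    exact mul_le_mul_of_nonneg_left h zero_le_two
end

section
/- Let X₁, ..., X_n be independent real random variables with E[Xᵢ] = 0 and E|Xᵢ|^q < ∞ for some real q ≥ 2. Then there exists a constant C(q) depending only on q such that E|∑ᵢ Xᵢ|^q ≤ C(q)·[ ∑ᵢ E|Xᵢ|^q + (∑ᵢ E|Xᵢ|²)^{q/2} ]. -/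
open MeasureTheory ProbabilityTheory

/-!
Rosenthal's inequality from a second-order expansion of `|x| ^ q`:
`|a + b| ^ q ≤ |a| ^ q + q |a| ^ (q - 2) a b + c (|a| ^ (q - 2) b ^ 2 + |b| ^ q)`.
Put `a = T = ∑_{j ∈ s} X j` and `b = Y = X i` with `i ∉ s` and integrate: the linear term has
mean zero because `Y` is centred and independent of `T`, the quadratic term factorises, and
Lyapunov's inequality `E|T| ^ (q - 2) ≤ (E|T| ^ q) ^ ((q - 2) / q)` yields the recursion
`A (insert i s) ≤ A s + c (A s ^ ((q - 2) / q) E|Y| ^ 2 + E|Y| ^ q)` for `A s = E|T| ^ q`.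
Any `L` with `c (L ^ ((q - 2) / q) ∑ E|X i| ^ 2 + ∑ E|X i| ^ q) ≤ L` then bounds every `A s`,
and `L = K (∑ E|X i| ^ q + (∑ E|X i| ^ 2) ^ (q / 2))` qualifies once `2c ≤ K ^ (2 / q)` and
`2c ≤ K`.
-/

theorem one_add_rpow_le {q s : ℝ} (hq : 2 ≤ q) (hs : s ∈ Set.Icc (-1 : ℝ) 1) :
    (1 + s) ^ q ≤ 1 + q * s + (q * 2 ^ (q - 1) + q ^ 2) * s ^ 2 := by
  set C := q * 2 ^ (q - 1) + q ^ 2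
  set h : ℝ → ℝ := fun s => 1 + q * s + C * s ^ 2 - (1 + s) ^ q
  set h' : ℝ → ℝ := fun s => q + 2 * C * s - q * (1 + s) ^ (q - 1)
  have hderiv : ∀ x, HasDerivAt h (h' x) x := fun x => by
    have hpow := ((hasDerivAt_id x).const_add 1).rpow_const (p := q) (Or.inr (by linarith))
    refine ((((hasDerivAt_id x).const_mul q).const_add 1).add
      ((hasDerivAt_pow 2 x).const_mul C) |>.sub hpow).congr_deriv ?_
    simp only [h', id]
    ring
  have hcont : Continuous h := continuous_iff_continuousAt.2 fun x => (hderiv x).continuousAt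
  have hq0 : 0 < q := by linarith
  have h2 : (0 : ℝ) < 2 ^ (q - 1) := by positivity
  suffices 0 ≤ h s by simp only [h] at this; linarith
  rcases le_total 0 s with hs0 | hs0
  · have hmono : MonotoneOn h (Set.Icc 0 1) := by
      refine monotoneOn_of_hasDerivWithinAt_nonneg (convex_Icc 0 1) hcont.continuousOn
        (fun x _ => (hderiv x).hasDerivWithinAt) fun x hx => ?_
      rw [interior_Icc] at hx
      -- convexity of `t ↦ t ^ (q - 1)` on the chord from `1` to `2`
      have hchord : (1 + x) ^ (q - 1) ≤ (1 - x) + x * 2 ^ (q - 1) := by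
        have := (convexOn_rpow (by linarith : 1 ≤ q - 1)).2 (Set.mem_Ici.2 zero_le_one)
          (Set.mem_Ici.2 zero_le_two) (by linarith [hx.2] : 0 ≤ 1 - x) hx.1.le (by ring)
        simpa [smul_eq_mul, show 1 - x + x * 2 = 1 + x by ring] using this
      simp only [h', C]
      nlinarith [mul_le_mul_of_nonneg_left hchord hq0.le, mul_pos hx.1 (mul_pos hq0 h2),
        mul_pos hx.1 (pow_pos hq0 2)]
    simpa [h] using hmono ⟨le_rfl, zero_le_one⟩ ⟨hs0, hs.2⟩ hs0
  · have hanti : AntitoneOn h (Set.Icc (-1) 0) := by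
      refine antitoneOn_of_hasDerivWithinAt_nonpos (convex_Icc (-1) 0) hcont.continuousOn
        (fun x _ => (hderiv x).hasDerivWithinAt) fun x hx => ?_
      rw [interior_Icc] at hx
      have hbern := one_add_mul_self_le_rpow_one_add hx.1.le (by linarith : 1 ≤ q - 1)
      simp only [h', C]
      nlinarith [mul_le_mul_of_nonneg_left hbern hq0.le, mul_pos (neg_pos.2 hx.2) (mul_pos hq0 h2),
        mul_pos (neg_pos.2 hx.2) (pow_pos hq0 2)]
    simpa [h] using hanti ⟨hs.1, hs0⟩ ⟨neg_nonpos.2 zero_le_one, le_rfl⟩ hs0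

theorem abs_abs_rpow_mul_self (a : ℝ) {r : ℝ} (hr : r + 1 ≠ 0) :
    |(|a| ^ r * a)| = |a| ^ (r + 1) := by
  rw [abs_mul, abs_of_nonneg (by positivity), Real.rpow_add_one' (abs_nonneg a) hr]

theorem abs_add_rpow_le_of_abs_le {q a b : ℝ} (hq : 2 ≤ q) (hba : |b| ≤ |a|) :
    |a + b| ^ q ≤ |a| ^ q + q * (|a| ^ (q - 2) * a) * b
      + (q * 2 ^ (q - 1) + q ^ 2) * (|a| ^ (q - 2) * b ^ 2) := by
  set C := q * 2 ^ (q - 1) + q ^ 2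
  have hpos : ∀ {a b : ℝ}, 0 < a → |b| ≤ a →
      |a + b| ^ q ≤ a ^ q + q * (a ^ (q - 2) * a) * b + C * (a ^ (q - 2) * b ^ 2) := by
    intro a b ha hba
    have hs : b / a ∈ Set.Icc (-1 : ℝ) 1 := by
      rw [Set.mem_Icc, le_div_iff₀ ha, div_le_one ha]
      constructor <;> linarith [abs_le.1 hba]
    have hq2 : a ^ q = a ^ (q - 2) * a ^ 2 := by
      rw [← Real.rpow_natCast, ← Real.rpow_add ha]; norm_num
    calc |a + b| ^ q = a ^ q * (1 + b / a) ^ q := by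
          rw [← Real.mul_rpow ha.le (by linarith [hs.1]), mul_add, mul_div_cancel₀ _ ha.ne',
            mul_one, abs_of_nonneg (by linarith [abs_le.1 hba])]
      _ ≤ a ^ q * (1 + q * (b / a) + C * (b / a) ^ 2) :=
          mul_le_mul_of_nonneg_left (one_add_rpow_le hq hs) (by positivity)
      _ = _ := by rw [hq2]; field_simp
  rcases lt_trichotomy a 0 with ha | rfl | ha
  · have := hpos (neg_pos.2 ha) (b := -b) (by rwa [abs_neg, ← abs_of_neg ha])
    rw [← neg_add, abs_neg, neg_sq] at this
    rw [abs_of_neg ha]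
    linarith [show q * ((-a) ^ (q - 2) * -a) * -b = q * ((-a) ^ (q - 2) * a) * b by ring]
  · obtain rfl : b = 0 := abs_nonpos_iff.1 (by simpa using hba)
    simp [Real.zero_rpow (by linarith : q ≠ 0)]
  · simpa [abs_of_pos ha] using hpos ha (by rwa [← abs_of_pos ha])

theorem abs_add_rpow_le_of_abs_ge {q a b : ℝ} (hq : 2 ≤ q) (hab : |a| ≤ |b|) :
    |a + b| ^ q ≤ |a| ^ q + q * (|a| ^ (q - 2) * a) * b + (2 ^ q + q) * |b| ^ q := by
  have hq0 : 0 ≤ q := by linarith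
  have hsum : |a + b| ^ q ≤ 2 ^ q * |b| ^ q := by
    rw [← Real.mul_rpow zero_le_two (abs_nonneg b)]
    gcongr
    linarith [abs_add_le a b]
  have hlin : |(|a| ^ (q - 2) * a) * b| ≤ |b| ^ q := by
    calc |(|a| ^ (q - 2) * a) * b| = |a| ^ (q - 1) * |b| := by
          rw [abs_mul, abs_abs_rpow_mul_self a (by linarith)]
          ring_nf
      _ ≤ |b| ^ (q - 1) * |b| := by gcongr; linarith
      _ = |b| ^ q := by rw [← Real.rpow_add_one' (abs_nonneg b) (by linarith)]; ring_nf
  nlinarith [abs_le.1 hlin, Real.rpow_nonneg (abs_nonneg a) q]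

theorem exists_abs_add_rpow_le {q : ℝ} (hq : 2 ≤ q) :
    ∃ c, 0 ≤ c ∧ ∀ a b : ℝ, |a + b| ^ q ≤
      |a| ^ q + q * (|a| ^ (q - 2) * a) * b + c * (|a| ^ (q - 2) * b ^ 2 + |b| ^ q) := by
  have hq0 : 0 ≤ q := by linarith
  have hC₁ : 0 ≤ q * 2 ^ (q - 1) + q ^ 2 := by positivity
  have hC₂ : 0 ≤ (2 : ℝ) ^ q + q := by positivity
  refine ⟨(q * 2 ^ (q - 1) + q ^ 2) + (2 ^ q + q), by positivity, fun a b => ?_⟩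
  have hsq : 0 ≤ |a| ^ (q - 2) * b ^ 2 := by positivity
  have hbq : 0 ≤ |b| ^ q := by positivity
  rcases le_total |b| |a| with hba | hab
  · nlinarith [abs_add_rpow_le_of_abs_le hq hba, mul_nonneg hC₁ hbq, mul_nonneg hC₂ hsq,
      mul_nonneg hC₂ hbq]
  · nlinarith [abs_add_rpow_le_of_abs_ge hq hab, mul_nonneg hC₁ hbq, mul_nonneg hC₁ hsq,
      mul_nonneg hC₂ hsq]

section Moments

variable {Ω : Type*} [MeasurableSpace Ω] {μ : Measure Ω}

theorem MeasureTheory.MemLp.integrable_abs_rpow [IsFiniteMeasure μ] {T : Ω → ℝ} {p r : ℝ}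
    (hT : MemLp T (ENNReal.ofReal p) μ) (hr : 0 ≤ r) (hrp : r ≤ p) :
    Integrable (fun ω => |T ω| ^ r) μ := by
  simpa [ENNReal.toReal_ofReal hr] using
    (hT.mono_exponent (ENNReal.ofReal_le_ofReal hrp)).integrable_norm_rpow'

theorem MeasureTheory.MemLp.integrable_abs_rpow_mul_self [IsFiniteMeasure μ] {T : Ω → ℝ}
    {p r : ℝ} (hT : MemLp T (ENNReal.ofReal p) μ) (hr : 0 ≤ r) (hrp : r + 1 ≤ p) :
    Integrable (fun ω => |T ω| ^ r * T ω) μ := by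
  refine (hT.integrable_abs_rpow (by linarith) hrp).mono
    ((by fun_prop : Measurable fun x : ℝ => |x| ^ r * x).comp_aemeasurable
      hT.1.aemeasurable).aestronglyMeasurable (ae_of_all _ fun ω => ?_)
  rw [Real.norm_eq_abs, Real.norm_eq_abs, abs_abs_rpow_mul_self _ (by linarith),
    abs_of_nonneg (Real.rpow_nonneg (abs_nonneg _) _)]

theorem integral_abs_rpow_le_integral_abs_rpow_rpow [IsProbabilityMeasure μ] {T : Ω → ℝ}
    {p r : ℝ} (hT : MemLp T (ENNReal.ofReal p) μ) (hr : 0 ≤ r) (hrp : r ≤ p) :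
    ∫ ω, |T ω| ^ r ∂μ ≤ (∫ ω, |T ω| ^ p ∂μ) ^ (r / p) := by
  obtain rfl | hr := hr.eq_or_lt
  · simp
  have hp : 0 < p := hr.trans_le hrp
  have hnorm := eLpNorm_le_eLpNorm_of_exponent_le (ENNReal.ofReal_le_ofReal hrp) hT.1
  rw [(hT.mono_exponent (ENNReal.ofReal_le_ofReal hrp)).eLpNorm_eq_integral_rpow_norm
      (by simpa using hr) ENNReal.ofReal_ne_top,
    hT.eLpNorm_eq_integral_rpow_norm (by simpa using hp) ENNReal.ofReal_ne_top,
    ENNReal.toReal_ofReal hr.le, ENNReal.toReal_ofReal hp.le,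
    ENNReal.ofReal_le_ofReal_iff (by positivity)] at hnorm
  have hIr : 0 ≤ ∫ ω, |T ω| ^ r ∂μ := integral_nonneg fun ω => by positivity
  have hIp : 0 ≤ ∫ ω, |T ω| ^ p ∂μ := integral_nonneg fun ω => by positivity
  simp only [Real.norm_eq_abs] at hnorm
  calc ∫ ω, |T ω| ^ r ∂μ = ((∫ ω, |T ω| ^ r ∂μ) ^ r⁻¹) ^ r := by
        rw [← Real.rpow_mul hIr, inv_mul_cancel₀ hr.ne', Real.rpow_one]
    _ ≤ ((∫ ω, |T ω| ^ p ∂μ) ^ p⁻¹) ^ r := by gcongr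
    _ = _ := by rw [← Real.rpow_mul hIp, inv_mul_eq_div]

theorem integral_abs_add_rpow_le [IsProbabilityMeasure μ] {q c : ℝ} (hq : 2 ≤ q) (hc : 0 ≤ c)
    (hpoint : ∀ a b : ℝ, |a + b| ^ q ≤
      |a| ^ q + q * (|a| ^ (q - 2) * a) * b + c * (|a| ^ (q - 2) * b ^ 2 + |b| ^ q))
    {T Y : Ω → ℝ} (hT : MemLp T (ENNReal.ofReal q) μ) (hY : MemLp Y (ENNReal.ofReal q) μ)
    (hTY : IndepFun T Y μ) (hY0 : ∫ ω, Y ω ∂μ = 0) :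
    ∫ ω, |T ω + Y ω| ^ q ∂μ ≤ ∫ ω, |T ω| ^ q ∂μ
      + c * ((∫ ω, |T ω| ^ q ∂μ) ^ ((q - 2) / q) * ∫ ω, |Y ω| ^ 2 ∂μ + ∫ ω, |Y ω| ^ q ∂μ) := by
  have hq2 : 0 ≤ q - 2 := by linarith
  have hlinMeas : Measurable fun x : ℝ => |x| ^ (q - 2) * x := by fun_prop
  have hindLin := hTY.comp hlinMeas measurable_id
  have hindQuad := hTY.comp (by fun_prop : Measurable fun x : ℝ => |x| ^ (q - 2))
    (by fun_prop : Measurable fun x : ℝ => |x| ^ 2)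
  have hTq := hT.integrable_abs_rpow (by linarith) le_rfl
  have hYq := hY.integrable_abs_rpow (by linarith) le_rfl
  have hTq2 := hT.integrable_abs_rpow hq2 (by linarith)
  have hY2 : Integrable (fun ω => |Y ω| ^ 2) μ := by
    simpa using hY.integrable_abs_rpow zero_le_two hq
  have hTlin := hT.integrable_abs_rpow_mul_self hq2 (by linarith)
  have hcovI : Integrable (fun ω => |T ω| ^ (q - 2) * T ω * Y ω) μ :=
    hindLin.integrable_mul hTlin (hY.integrable (ENNReal.one_le_ofReal.2 (by linarith)))
  have hlinI : Integrable (fun ω => q * (|T ω| ^ (q - 2) * T ω) * Y ω) μ := by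
    simpa only [mul_assoc] using hcovI.const_mul q
  have hquadI : Integrable (fun ω => |T ω| ^ (q - 2) * |Y ω| ^ 2) μ :=
    hindQuad.integrable_mul hTq2 hY2
  have hlin : ∫ ω, q * (|T ω| ^ (q - 2) * T ω) * Y ω ∂μ = 0 := by
    have hcov : ∫ ω, |T ω| ^ (q - 2) * T ω * Y ω ∂μ = 0 :=
      (hindLin.integral_fun_mul_eq_mul_integral hTlin.aestronglyMeasurable hY.1).trans
        (by simp [hY0])
    simp_rw [mul_assoc q]
    rw [integral_const_mul, hcov, mul_zero]
  have hquad : ∫ ω, |T ω| ^ (q - 2) * |Y ω| ^ 2 ∂μ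
      = (∫ ω, |T ω| ^ (q - 2) ∂μ) * ∫ ω, |Y ω| ^ 2 ∂μ :=
    hindQuad.integral_fun_mul_eq_mul_integral hTq2.aestronglyMeasurable hY2.aestronglyMeasurable
  have hfirst : Integrable (fun ω => |T ω| ^ q + q * (|T ω| ^ (q - 2) * T ω) * Y ω) μ :=
    hTq.add hlinI
  have hsecond : Integrable (fun ω => c * (|T ω| ^ (q - 2) * |Y ω| ^ 2 + |Y ω| ^ q)) μ :=
    (hquadI.add hYq).const_mul c
  calc ∫ ω, |T ω + Y ω| ^ q ∂μ
      ≤ ∫ ω, |T ω| ^ q + q * (|T ω| ^ (q - 2) * T ω) * Y ω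
          + c * (|T ω| ^ (q - 2) * |Y ω| ^ 2 + |Y ω| ^ q) ∂μ := by
        refine integral_mono ?_ (hfirst.add hsecond) fun ω => by simpa using hpoint (T ω) (Y ω)
        simpa using (hT.add hY).integrable_abs_rpow (by linarith) le_rfl
    _ = ∫ ω, |T ω| ^ q ∂μ
          + c * ((∫ ω, |T ω| ^ (q - 2) ∂μ) * ∫ ω, |Y ω| ^ 2 ∂μ + ∫ ω, |Y ω| ^ q ∂μ) := by
        rw [integral_add hfirst hsecond, integral_add hTq hlinI, hlin,
          integral_const_mul, integral_add hquadI hYq, hquad, add_zero]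
    _ ≤ _ := by
        gcongr
        exact integral_abs_rpow_le_integral_abs_rpow_rpow hT hq2 (by linarith)

end Moments

theorem Finset.le_of_forall_insert_le_add_rpow {ι : Type*} [Fintype ι] [DecidableEq ι]
    {f : Finset ι → ℝ} {v b : ι → ℝ} {c θ L : ℝ} (hc : 0 ≤ c) (hθ : 0 ≤ θ) (hL₀ : 0 ≤ L)
    (hf : ∀ s, 0 ≤ f s) (hv : ∀ i, 0 ≤ v i) (hb : ∀ i, 0 ≤ b i) (hf₀ : f ∅ = 0)
    (hstep : ∀ s i, i ∉ s → f (insert i s) ≤ f s + c * (f s ^ θ * v i + b i))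
    (hL : c * (L ^ θ * ∑ i, v i + ∑ i, b i) ≤ L) (s : Finset ι) : f s ≤ L := by
  have hpartial : ∀ s : Finset ι, c * ∑ i ∈ s, (L ^ θ * v i + b i) ≤ L := fun s =>
    calc c * ∑ i ∈ s, (L ^ θ * v i + b i) ≤ c * ∑ i, (L ^ θ * v i + b i) := by
          gcongr
          exacts [fun i _ _ => add_nonneg (mul_nonneg (by positivity) (hv i)) (hb i), subset_univ s]
      _ = c * (L ^ θ * ∑ i, v i + ∑ i, b i) := by rw [sum_add_distrib, mul_sum]
      _ ≤ L := hL
  suffices ∀ s : Finset ι, f s ≤ c * ∑ i ∈ s, (L ^ θ * v i + b i) from (this s).trans (hpartial s)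
  intro s
  induction s using Finset.induction_on with
  | empty => simp [hf₀]
  | insert i s hi ih =>
    have hθle : f s ^ θ ≤ L ^ θ := Real.rpow_le_rpow (hf s) (ih.trans (hpartial s)) hθ
    calc f (insert i s) ≤ f s + c * (f s ^ θ * v i + b i) := hstep s i hi
      _ ≤ c * ∑ j ∈ s, (L ^ θ * v j + b j) + c * (L ^ θ * v i + b i) := by
          gcongr
          exact hv i
      _ = c * ∑ j ∈ insert i s, (L ^ θ * v j + b j) := by rw [sum_insert hi]; ring

theorem mul_rpow_add_le {q c K B V : ℝ} (hq : 2 ≤ q) (hc : 0 ≤ c) (hK : 0 ≤ K) (hB : 0 ≤ B)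
    (hV : 0 ≤ V) (hcK : 2 * c ≤ K ^ (2 / q)) (hcK' : 2 * c ≤ K) :
    c * ((K * (B + V ^ (q / 2))) ^ ((q - 2) / q) * V + B) ≤ K * (B + V ^ (q / 2)) := by
  set M := B + V ^ (q / 2)
  have hq0 : 0 < q := by linarith
  have hM : 0 ≤ M := by positivity
  have hVM : V ≤ M ^ (2 / q) := by
    calc V = (V ^ (q / 2)) ^ (2 / q) := by
          rw [← Real.rpow_mul hV, div_mul_div_comm, mul_comm, div_self (by positivity),
            Real.rpow_one]
      _ ≤ M ^ (2 / q) := by gcongr; linarith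
  have hexp : (q - 2) / q + 2 / q = 1 := by rw [← add_div, sub_add_cancel, div_self hq0.ne']
  have hsplit : ∀ x : ℝ, 0 ≤ x → x ^ ((q - 2) / q) * x ^ (2 / q) = x := fun x hx => by
    rw [← Real.rpow_add' hx (hexp ▸ one_ne_zero), hexp, Real.rpow_one]
  have hquad : c * ((K * M) ^ ((q - 2) / q) * V) ≤ K * M / 2 :=
    calc c * ((K * M) ^ ((q - 2) / q) * V)
        ≤ c * (K ^ ((q - 2) / q) * M ^ ((q - 2) / q) * M ^ (2 / q)) := by
          rw [Real.mul_rpow hK hM]; gcongr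
      _ = c * K ^ ((q - 2) / q) * M := by rw [mul_assoc _ (M ^ _), hsplit M hM]; ring
      _ ≤ K ^ (2 / q) / 2 * K ^ ((q - 2) / q) * M := by gcongr; linarith
      _ = K * M / 2 := by rw [mul_comm (K ^ (2 / q) / 2), ← mul_div_assoc, hsplit K hK]; ring
  have hlin : c * B ≤ K * M / 2 := by
    have : B ≤ M := le_add_of_nonneg_right (by positivity)
    nlinarith
  linarith [mul_add c ((K * M) ^ ((q - 2) / q) * V) B]

/-- Rosenthal's inequality: for `q ≥ 2` there exists a constant `C(q)` such that for any
independent centered random variables `X₁,...,Xₙ` with finite `q`-th moments,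
`E|∑ Xᵢ|^q ≤ C(q)·(∑ E|Xᵢ|^q + (∑ E|Xᵢ|²)^(q/2))`. -/
theorem rosenthal_inequality (q : ℝ) (hq : 2 ≤ q) :
    ∃ C : ℝ, ∀ (Ω : Type) (_ : MeasurableSpace Ω) (μ : Measure Ω),
      IsProbabilityMeasure μ →
      ∀ (n : ℕ) (X : Fin n → Ω → ℝ),
        iIndepFun X μ →
        (∀ i, Measurable (X i)) →
        (∀ i, ∫ ω, X i ω ∂μ = 0) →
        (∀ i, MemLp (X i) (ENNReal.ofReal q) μ) →
        ∫ ω, |∑ i, X i ω| ^ q ∂μ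
          ≤ C * ((∑ i, ∫ ω, |X i ω| ^ q ∂μ)
              + (∑ i, ∫ ω, |X i ω| ^ 2 ∂μ) ^ (q / 2)) := by
  obtain ⟨c, hc, hpoint⟩ := exists_abs_add_rpow_le hq
  set D := max 1 (2 * c)
  have hD : 0 ≤ D := zero_le_one.trans (le_max_left _ _)
  have hcK : 2 * c ≤ (D ^ (q / 2)) ^ (2 / q) := by
    rw [← inv_div, Real.rpow_inv_rpow hD (by positivity)]
    exact le_max_right _ _
  have hcK' : 2 * c ≤ D ^ (q / 2) :=
    (le_max_right _ _).trans (Real.self_le_rpow_of_one_le (le_max_left _ _) (by linarith))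
  refine ⟨D ^ (q / 2), fun Ω _ μ _ n X hX _ hX₀ hXq => ?_⟩
  have hbound := mul_rpow_add_le (B := ∑ i, ∫ ω, |X i ω| ^ q ∂μ)
    (V := ∑ i, ∫ ω, |X i ω| ^ 2 ∂μ) hq hc (by positivity)
    (Finset.sum_nonneg fun i _ => integral_nonneg fun ω => by positivity)
    (Finset.sum_nonneg fun i _ => integral_nonneg fun ω => by positivity) hcK hcK'
  refine Finset.le_of_forall_insert_le_add_rpow (f := fun s => ∫ ω, |∑ i ∈ s, X i ω| ^ q ∂μ)
    hc (div_nonneg (by linarith) (by linarith)) (by positivity)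
    (fun s => integral_nonneg fun ω => by positivity)
    (fun i => integral_nonneg fun ω => by positivity)
    (fun i => integral_nonneg fun ω => by positivity)
    (by simp [Real.zero_rpow (by linarith : q ≠ 0)]) (fun s i hi => ?_) hbound Finset.univ
  have hind : IndepFun (∑ j ∈ s, X j) (X i) μ :=
    hX.indepFun_finsetSum_of_notMem₀ (fun j => (hXq j).1.aemeasurable) hi
  simp_rw [Finset.sum_insert hi, add_comm (X i _)]
  simpa only [Finset.sum_apply] using
    integral_abs_add_rpow_le hq hc hpoint (memLp_finsetSum' s fun j _ => hXq j) (hXq i) hind (hX₀ i)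
end
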